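/- arXiv:2604.17558 — 4 statements merged into one kernel-verified Lean document; each statement's English description precedes it below -/
import Mathlib

section
/- In the exact Prony model with m ≥ 1, nonzero amplitudes, and pairwise distinct nodes, let the observed samples be x_q = s_q + e_q with η = max_{0≤q≤2m−1} |e_q|, and set ΔH = H̃ − H and Δh = h̃ − h. Then ‖ΔH‖₂ ≤ mη and ‖Δh‖₂ ≤ √m·η. Moreover, if η⋆ > 0 satisfies η ≤ η⋆ and m·η⋆·‖H⁻¹‖₂ < 1, then the observed Hankel matrix H̃ is invertible and the observed recurrence coefficients c̃ = −H̃⁻¹h̃ satisfy ‖c̃ − c‖₂ ≤ K_c(η⋆)·η, where K_c(η⋆) = ‖H⁻¹‖₂(√m + m‖c‖₂)/(1 − m·η⋆·‖H⁻¹‖₂). -/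
open Matrix Polynomial

noncomputable section

/-- Exact Prony samples `s_q = Σ_ν b_ν z_ν^q`. -/
def pronySample (m : ℕ) (b z : Fin m → ℂ) (q : ℕ) : ℂ :=
  ∑ ν, b ν * z ν ^ q

/-- Hankel matrix `(x_{r+s})_{r,s=0}^{m-1}` of a sample sequence. -/
def hankelOf (m : ℕ) (x : ℕ → ℂ) : Matrix (Fin m) (Fin m) ℂ :=
  Matrix.of fun r s : Fin m => x ((r : ℕ) + (s : ℕ))

/-- Right-hand side vector `(x_m, …, x_{2m-1})`. -/
def rhsOf (m : ℕ) (x : ℕ → ℂ) : Fin m → ℂ :=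
  fun q => x (m + (q : ℕ))

/-- Coefficient vector of the monic annihilating polynomial `∏_ν (ζ - z_ν)`. -/
def pronyCoeff (m : ℕ) (z : Fin m → ℂ) : Fin m → ℂ :=
  fun k => (∏ ν, (X - C (z ν))).coeff (k : ℕ)

/-- The `ℓ² → ℓ²` operator (spectral) norm of a complex square matrix. -/
def opNorm2 {m : ℕ} (M : Matrix (Fin m) (Fin m) ℂ) : ℝ :=
  ‖(Matrix.toEuclideanCLM (𝕜 := ℂ) M :
      EuclideanSpace ℂ (Fin m) →L[ℂ] EuclideanSpace ℂ (Fin m))‖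

/-- The Euclidean norm of a vector in `ℂ^m`. -/
def vecNorm2 {m : ℕ} (v : Fin m → ℂ) : ℝ :=
  Real.sqrt (∑ i, ‖v i‖ ^ 2)

/-! ### Auxiliary lemmas -/

open scoped Matrix.Norms.L2Operator

section Aux

variable {m : ℕ}

lemma opNorm2_eq_norm (M : Matrix (Fin m) (Fin m) ℂ) : opNorm2 M = ‖M‖ := rfl

lemma vecNorm2_eq (v : Fin m → ℂ) :
    vecNorm2 v = ‖((WithLp.equiv 2 (Fin m → ℂ)).symm v : EuclideanSpace ℂ (Fin m))‖ := by
  rw [EuclideanSpace.norm_eq, vecNorm2]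
  simp

lemma vecNorm2_nonneg (v : Fin m → ℂ) : 0 ≤ vecNorm2 v := Real.sqrt_nonneg _

lemma vecNorm2_neg (v : Fin m → ℂ) : vecNorm2 (-v) = vecNorm2 v := by
  unfold vecNorm2; simp

lemma vecNorm2_add_le (v w : Fin m → ℂ) :
    vecNorm2 (v + w) ≤ vecNorm2 v + vecNorm2 w := by
  rw [vecNorm2_eq, vecNorm2_eq, vecNorm2_eq]
  rw [show (WithLp.equiv 2 (Fin m → ℂ)).symm (v + w)
      = (WithLp.equiv 2 (Fin m → ℂ)).symm v + (WithLp.equiv 2 (Fin m → ℂ)).symm w from rfl]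
  exact norm_add_le _ _

lemma vecNorm2_le_of_bound {v : Fin m → ℂ} {a : ℝ} (ha : 0 ≤ a)
    (h : ∀ i, ‖v i‖ ≤ a) : vecNorm2 v ≤ Real.sqrt m * a := by
  have h1 : vecNorm2 v ≤ Real.sqrt (∑ _i : Fin m, a ^ 2) := by
    apply Real.sqrt_le_sqrt
    exact Finset.sum_le_sum fun i _ => pow_le_pow_left₀ (norm_nonneg _) (h i) 2
  refine h1.trans ?_
  rw [Finset.sum_const, Finset.card_univ, Fintype.card_fin, nsmul_eq_mul,
    Real.sqrt_mul (Nat.cast_nonneg m), Real.sqrt_sq ha]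

lemma vecNorm2_mulVec_le (A : Matrix (Fin m) (Fin m) ℂ) (v : Fin m → ℂ) :
    vecNorm2 (A *ᵥ v) ≤ ‖A‖ * vecNorm2 v := by
  rw [vecNorm2_eq, vecNorm2_eq]
  exact A.l2_opNorm_mulVec ((WithLp.equiv 2 (Fin m → ℂ)).symm v)

lemma sqrt_aux (n : ℕ) (a t : ℝ) (ha : 0 ≤ a) (ht : 0 ≤ t) :
    Real.sqrt ((n : ℝ) * (a * (Real.sqrt n * t)) ^ 2) = (n : ℝ) * a * t := by
  have h : (n : ℝ) * (a * (Real.sqrt n * t)) ^ 2 = ((n : ℝ) * a * t) ^ 2 := by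
    have h2 : Real.sqrt n ^ 2 = (n : ℝ) := Real.sq_sqrt (Nat.cast_nonneg n)
    rw [mul_pow, mul_pow, h2]; ring
  rw [h, Real.sqrt_sq (by positivity)]

lemma sum_abs_le_sqrt_card (v : Fin m → ℂ) :
    ∑ s, ‖v s‖ ≤ Real.sqrt m * Real.sqrt (∑ s, ‖v s‖ ^ 2) := by
  have h1 : (∑ s, ‖v s‖) ^ 2 ≤ (m : ℝ) * ∑ s, ‖v s‖ ^ 2 := by
    simpa using sq_sum_le_card_mul_sum_sq (s := (Finset.univ : Finset (Fin m)))
      (f := fun s => ‖v s‖)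
  rw [← Real.sqrt_mul (Nat.cast_nonneg m)]
  exact Real.le_sqrt_of_sq_le h1

lemma opNorm_le_of_entry_bound (M : Matrix (Fin m) (Fin m) ℂ) {a : ℝ} (ha : 0 ≤ a)
    (hM : ∀ r s, ‖M r s‖ ≤ a) : ‖M‖ ≤ (m : ℝ) * a := by
  rw [Matrix.cstar_norm_def]
  apply ContinuousLinearMap.opNorm_le_bound _ (by positivity)
  intro v
  have hv : ‖v‖ = Real.sqrt (∑ s, ‖v s‖ ^ 2) := by
    rw [EuclideanSpace.norm_eq]
  set t := Real.sqrt (∑ s, ‖v s‖ ^ 2) with ht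
  have ht0 : 0 ≤ t := Real.sqrt_nonneg _
  set w : Fin m → ℂ := WithLp.equiv 2 (Fin m → ℂ) v with hw
  have key : ∀ r : Fin m, ‖(M *ᵥ w) r‖ ≤ a * (Real.sqrt m * t) := by
    intro r
    calc ‖∑ s, M r s * w s‖ ≤ ∑ s, ‖M r s * w s‖ :=
          norm_sum_le _ _
      _ ≤ ∑ s, a * ‖w s‖ := by
          refine Finset.sum_le_sum fun s _ => ?_
          rw [norm_mul]
          exact mul_le_mul_of_nonneg_right (hM r s) (norm_nonneg _)
      _ = a * ∑ s, ‖w s‖ := by rw [Finset.mul_sum]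
      _ ≤ a * (Real.sqrt m * t) := mul_le_mul_of_nonneg_left (sum_abs_le_sqrt_card w) ha
  have happ : Matrix.toEuclideanCLM (𝕜 := ℂ) M v
      = (WithLp.equiv 2 (Fin m → ℂ)).symm (M *ᵥ w) := by
    apply (WithLp.equiv 2 (Fin m → ℂ)).injective
    rw [WithLp.equiv_apply, Matrix.ofLp_toEuclideanCLM, Equiv.apply_symm_apply]; rfl
  rw [happ, hv, EuclideanSpace.norm_eq]
  simp only [WithLp.equiv_symm_apply, PiLp.toLp_apply]
  have step : Real.sqrt (∑ r, ‖(M *ᵥ w) r‖ ^ 2)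
      ≤ Real.sqrt (∑ _r : Fin m, (a * (Real.sqrt m * t)) ^ 2) := by
    apply Real.sqrt_le_sqrt
    exact Finset.sum_le_sum fun r _ => pow_le_pow_left₀ (norm_nonneg _) (key r) 2
  refine step.trans ?_
  rw [Finset.sum_const, Finset.card_univ, Fintype.card_fin, nsmul_eq_mul]
  exact (sqrt_aux m a t ha ht0).le

lemma hankel_factor (b z : Fin m → ℂ) :
    hankelOf m (pronySample m b z)
      = (Matrix.vandermonde z)ᵀ * Matrix.diagonal b * Matrix.vandermonde z := by
  ext r s
  simp [hankelOf, pronySample, Matrix.mul_apply, Matrix.vandermonde, Matrix.diagonal,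
    Finset.sum_mul, pow_add]
  congr 1; ext ν; ring

lemma hankel_isUnit (b z : Fin m → ℂ) (hb : ∀ ν, b ν ≠ 0) (hz : Function.Injective z) :
    IsUnit (hankelOf m (pronySample m b z)) := by
  rw [Matrix.isUnit_iff_isUnit_det, isUnit_iff_ne_zero, hankel_factor]
  simp only [Matrix.det_mul, Matrix.det_transpose, Matrix.det_diagonal]
  have hV : (Matrix.vandermonde z).det ≠ 0 := Matrix.det_vandermonde_ne_zero_iff.mpr hz
  exact mul_ne_zero (mul_ne_zero hV (Finset.prod_ne_zero_iff.2 fun ν _ => hb ν)) hV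

lemma prony_poly_eval (z : Fin m → ℂ) (ν : Fin m) :
    (∏ μ, (X - C (z μ))).eval (z ν) = 0 := by
  rw [eval_prod]
  exact Finset.prod_eq_zero (Finset.mem_univ ν) (by simp)

lemma prony_poly_monic (z : Fin m → ℂ) : (∏ μ, (X - C (z μ))).Monic :=
  monic_prod_of_monic _ _ fun μ _ => monic_X_sub_C _

lemma prony_poly_natDegree (z : Fin m → ℂ) : (∏ μ, (X - C (z μ))).natDegree = m := by
  rw [natDegree_prod _ _ fun μ _ => X_sub_C_ne_zero _]
  simp

lemma prony_root_sum (z : Fin m → ℂ) (ν : Fin m) :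
    ∑ s : Fin m, pronyCoeff m z s * z ν ^ (s : ℕ) = -(z ν ^ m) := by
  have h0 := prony_poly_eval z ν
  rw [eval_eq_sum_range' (n := m + 1) (by rw [prony_poly_natDegree]; omega)] at h0
  rw [Finset.sum_range_succ] at h0
  have hm : (∏ μ, (X - C (z μ))).coeff m = 1 := by
    have := (prony_poly_monic z).coeff_natDegree
    rwa [prony_poly_natDegree] at this
  rw [hm, one_mul] at h0
  have hs : ∑ i ∈ Finset.range m, (∏ μ, (X - C (z μ))).coeff i * z ν ^ i
      = ∑ s : Fin m, pronyCoeff m z s * z ν ^ (s : ℕ) := by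
    rw [Finset.sum_range]; rfl
  rw [hs] at h0
  linear_combination h0

lemma prony_recurrence (b z : Fin m → ℂ) :
    (hankelOf m (pronySample m b z)) *ᵥ pronyCoeff m z = -(rhsOf m (pronySample m b z)) := by
  funext r
  simp only [Matrix.mulVec, dotProduct, hankelOf, Matrix.of_apply, Pi.neg_apply, rhsOf,
    pronySample]
  calc ∑ s : Fin m, (∑ ν : Fin m, b ν * z ν ^ ((r : ℕ) + (s : ℕ))) * pronyCoeff m z s
      = ∑ ν : Fin m, b ν * z ν ^ (r : ℕ) * ∑ s : Fin m, pronyCoeff m z s * z ν ^ (s : ℕ) := by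
        simp_rw [Finset.sum_mul, Finset.mul_sum]
        rw [Finset.sum_comm]
        refine Finset.sum_congr rfl fun ν _ => Finset.sum_congr rfl fun s _ => ?_
        rw [pow_add]; ring
    _ = -∑ ν : Fin m, b ν * z ν ^ (m + (r : ℕ)) := by
        rw [← Finset.sum_neg_distrib]
        refine Finset.sum_congr rfl fun ν _ => ?_
        rw [prony_root_sum, pow_add]; ring

lemma matrix_complete : CompleteSpace (Matrix (Fin m) (Fin m) ℂ) :=
  FiniteDimensional.complete ℂ _

lemma matrix_norm_one (hm : 1 ≤ m) : ‖(1 : Matrix (Fin m) (Fin m) ℂ)‖ = 1 := by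
  haveI : Nonempty (Fin m) := ⟨⟨0, hm⟩⟩
  rw [Matrix.cstar_norm_def, _root_.map_one]
  exact ContinuousLinearMap.norm_id

lemma matrix_inv_unit {H : Matrix (Fin m) (Fin m) ℂ} (hH : IsUnit H) :
    H⁻¹ = ↑hH.unit⁻¹ := by
  rw [Matrix.nonsing_inv_eq_ringInverse]
  conv_lhs => rw [← hH.unit_spec]
  rw [Ring.inverse_unit]

lemma perturb (hm : 1 ≤ m) (H D : Matrix (Fin m) (Fin m) ℂ) (hH : IsUnit H)
    (hsmall : ‖H⁻¹‖ * ‖D‖ < 1) :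
    IsUnit (H + D) ∧ ‖(H + D)⁻¹‖ ≤ ‖H⁻¹‖ / (1 - ‖H⁻¹‖ * ‖D‖) := by
  haveI : CompleteSpace (Matrix (Fin m) (Fin m) ℂ) := matrix_complete
  set u := hH.unit with hu
  have hinv : H⁻¹ = ↑u⁻¹ := matrix_inv_unit hH
  set t : Matrix (Fin m) (Fin m) ℂ := -((↑u⁻¹ : Matrix (Fin m) (Fin m) ℂ) * D) with htdef
  have htn : ‖t‖ ≤ ‖H⁻¹‖ * ‖D‖ := by
    rw [htdef, norm_neg, hinv]
    exact norm_mul_le _ _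
  have ht : ‖t‖ < 1 := lt_of_le_of_lt htn hsmall
  set w := Units.oneSub t ht with hwdef
  have hval : ((u * w : (Matrix (Fin m) (Fin m) ℂ)ˣ) : Matrix (Fin m) (Fin m) ℂ) = H + D := by
    rw [Units.val_mul, hwdef, Units.val_oneSub, htdef, sub_neg_eq_add, mul_add, mul_one,
      Units.mul_inv_cancel_left, hH.unit_spec]
  have hunit : IsUnit (H + D) := by rw [← hval]; exact (u * w).isUnit
  constructor
  · exact hunit
  · have hinv2 : (H + D)⁻¹
        = (↑w⁻¹ : Matrix (Fin m) (Fin m) ℂ) * (↑u⁻¹ : Matrix (Fin m) (Fin m) ℂ) := by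
      rw [matrix_inv_unit hunit]
      have h3 : hunit.unit = u * w := by
        apply Units.ext; rw [hunit.unit_spec, hval]
      rw [h3, _root_.mul_inv_rev, Units.val_mul]
    have hwinv : ‖(↑w⁻¹ : Matrix (Fin m) (Fin m) ℂ)‖ ≤ (1 - ‖t‖)⁻¹ := by
      have : (↑w⁻¹ : Matrix (Fin m) (Fin m) ℂ) = ∑' n : ℕ, t ^ n := rfl
      rw [this]
      refine tsum_of_norm_bounded (hasSum_geometric_of_lt_one (norm_nonneg t) ht) ?_
      intro n
      cases n with
      | zero => simp [matrix_norm_one hm]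
      | succ k => exact norm_pow_le' t k.succ_pos
    have hden : 0 < 1 - ‖H⁻¹‖ * ‖D‖ := by linarith
    have hden2 : 0 < 1 - ‖t‖ := by linarith
    calc ‖(H + D)⁻¹‖ ≤ ‖(↑w⁻¹ : Matrix (Fin m) (Fin m) ℂ)‖ * ‖H⁻¹‖ := by
          rw [hinv2, hinv]; exact norm_mul_le _ _
      _ ≤ (1 - ‖t‖)⁻¹ * ‖H⁻¹‖ :=
          mul_le_mul_of_nonneg_right hwinv (norm_nonneg _)
      _ ≤ (1 - ‖H⁻¹‖ * ‖D‖)⁻¹ * ‖H⁻¹‖ := by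
          apply mul_le_mul_of_nonneg_right _ (norm_nonneg _)
          exact inv_anti₀ hden (by linarith)
      _ = ‖H⁻¹‖ / (1 - ‖H⁻¹‖ * ‖D‖) := by rw [div_eq_inv_mul]

end Aux

/-- **Deterministic perturbation of the Prony recurrence coefficients.**
With observed samples `x_q = s_q + e_q` and `η = max_{q<2m} |e_q|`:
`‖H̃ − H‖₂ ≤ mη`, `‖h̃ − h‖₂ ≤ √m·η`; and if `η ≤ η⋆` with
`m·η⋆·‖H⁻¹‖₂ < 1`, then `H̃` is invertible and the observed coefficients
`c̃ = −H̃⁻¹ h̃` satisfy `‖c̃ − c‖₂ ≤ K_c(η⋆)·η` with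
`K_c(η⋆) = ‖H⁻¹‖₂(√m + m‖c‖₂)/(1 − m·η⋆·‖H⁻¹‖₂)`. -/
theorem prony_coefficient_perturbation (m : ℕ) (hm : 1 ≤ m) (b z : Fin m → ℂ)
    (hb : ∀ ν, b ν ≠ 0) (hz : Function.Injective z)
    (e x : ℕ → ℂ) (hx : ∀ q, x q = pronySample m b z q + e q)
    (η : ℝ)
    (hη_ub : ∀ q < 2 * m, ‖e q‖ ≤ η)
    (hη_mem : ∃ q < 2 * m, ‖e q‖ = η) :
    opNorm2 (hankelOf m x - hankelOf m (pronySample m b z)) ≤ (m : ℝ) * η ∧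
    vecNorm2 (rhsOf m x - rhsOf m (pronySample m b z)) ≤ Real.sqrt (m : ℝ) * η ∧
    ∀ ηs : ℝ, 0 < ηs → η ≤ ηs →
      (m : ℝ) * ηs * opNorm2 ((hankelOf m (pronySample m b z))⁻¹) < 1 →
      IsUnit (hankelOf m x) ∧
      vecNorm2 (-((hankelOf m x)⁻¹.mulVec (rhsOf m x)) - pronyCoeff m z)
        ≤ opNorm2 ((hankelOf m (pronySample m b z))⁻¹)
            * (Real.sqrt (m : ℝ) + (m : ℝ) * vecNorm2 (pronyCoeff m z))
            / (1 - (m : ℝ) * ηs * opNorm2 ((hankelOf m (pronySample m b z))⁻¹))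
          * η := by
  obtain ⟨q0, _, hq0⟩ := hη_mem
  have hη0 : 0 ≤ η := hq0 ▸ norm_nonneg _
  set S := pronySample m b z with hS
  set H := hankelOf m S with hHdef
  set T := hankelOf m x with hTdef
  set D := T - H with hDdef
  set Δh := rhsOf m x - rhsOf m S with hΔhdef
  have hDentry : ∀ r s : Fin m, D r s = e ((r : ℕ) + (s : ℕ)) := by
    intro r s
    simp only [hDdef, Matrix.sub_apply, hTdef, hHdef, hankelOf, Matrix.of_apply, hx]
    ring
  have hDbound : ‖D‖ ≤ (m : ℝ) * η := by
    apply opNorm_le_of_entry_bound _ hη0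
    intro r s
    rw [hDentry]
    exact hη_ub _ (by have := r.2; have := s.2; omega)
  have hΔhbound : vecNorm2 Δh ≤ Real.sqrt m * η := by
    apply vecNorm2_le_of_bound hη0
    intro q
    have : Δh q = e (m + (q : ℕ)) := by
      simp only [hΔhdef, Pi.sub_apply, rhsOf, hx]; ring
    rw [this]
    exact hη_ub _ (by have := q.2; omega)
  refine ⟨hDbound, hΔhbound, ?_⟩
  intro ηs hηs hηηs hkey
  simp only [opNorm2_eq_norm] at hkey ⊢
  have hH : IsUnit H := hankel_isUnit b z hb hz
  set β := ‖H⁻¹‖ with hβ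
  have hβ0 : 0 ≤ β := norm_nonneg _
  have hkey' : (m : ℝ) * ηs * β < 1 := hkey
  have hDs : ‖D‖ ≤ (m : ℝ) * ηs :=
    hDbound.trans (by nlinarith [Nat.cast_nonneg (α := ℝ) m])
  have hsmall : ‖H⁻¹‖ * ‖D‖ < 1 := by
    calc ‖H⁻¹‖ * ‖D‖ ≤ β * ((m : ℝ) * ηs) := mul_le_mul_of_nonneg_left hDs hβ0
      _ = (m : ℝ) * ηs * β := by ring
      _ < 1 := hkey'
  have hHD : H + D = T := by rw [hDdef]; abel
  obtain ⟨hTU, hTinv⟩ := perturb hm H D hH hsmall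
  rw [hHD] at hTU hTinv
  rw [← hβ] at hTinv
  refine ⟨hTU, ?_⟩
  have hTdet : IsUnit T.det := (Matrix.isUnit_iff_isUnit_det T).mp hTU
  set c := pronyCoeff m z with hc
  set ct : Fin m → ℂ := -(T⁻¹ *ᵥ rhsOf m x) with hct
  -- the key identity
  have hid : ct - c = T⁻¹ *ᵥ (-(Δh + D *ᵥ c)) := by
    have h1 : T *ᵥ (ct - c) = -(Δh + D *ᵥ c) := by
      have hTc : T *ᵥ ct = -(rhsOf m x) := by
        rw [hct, Matrix.mulVec_neg, Matrix.mulVec_mulVec, Matrix.mul_nonsing_inv T hTdet,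
          Matrix.one_mulVec]
      have hTc2 : T *ᵥ c = -(rhsOf m S) + D *ᵥ c := by
        conv_lhs => rw [← hHD]
        rw [Matrix.add_mulVec, prony_recurrence b z]
      rw [Matrix.mulVec_sub, hTc, hTc2]
      rw [hΔhdef]
      funext i
      simp only [Pi.neg_apply, Pi.sub_apply, Pi.add_apply]
      ring
    rw [← h1, Matrix.mulVec_mulVec, Matrix.nonsing_inv_mul T hTdet, Matrix.one_mulVec]
  -- norm estimates
  have hC0 : 0 ≤ vecNorm2 c := vecNorm2_nonneg _
  have hnum : vecNorm2 (-(Δh + D *ᵥ c)) ≤ Real.sqrt m * η + (m : ℝ) * η * vecNorm2 c := by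
    rw [vecNorm2_neg]
    refine (vecNorm2_add_le _ _).trans ?_
    have h2 : vecNorm2 (D *ᵥ c) ≤ (m : ℝ) * η * vecNorm2 c :=
      (vecNorm2_mulVec_le D c).trans (mul_le_mul_of_nonneg_right hDbound hC0)
    linarith
  have hnum0 : 0 ≤ Real.sqrt m * η + (m : ℝ) * η * vecNorm2 c := by positivity
  have hden0 : 0 < 1 - (m : ℝ) * ηs * β := by linarith
  have hTinv2 : ‖T⁻¹‖ ≤ β / (1 - (m : ℝ) * ηs * β) := by
    refine hTinv.trans ?_
    have hd1 : 0 < 1 - β * ‖D‖ := by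
      rw [hβ]; linarith
    have hmono : 1 - (m : ℝ) * ηs * β ≤ 1 - β * ‖D‖ := by
      have h4 : β * ‖D‖ ≤ (m : ℝ) * ηs * β := by
        calc β * ‖D‖ ≤ β * ((m : ℝ) * ηs) := mul_le_mul_of_nonneg_left hDs hβ0
          _ = (m : ℝ) * ηs * β := by ring
      linarith
    rw [hβ] at hden0 hmono hd1 ⊢
    exact div_le_div_of_nonneg_left (norm_nonneg _) hden0 hmono
  calc vecNorm2 (ct - c) ≤ ‖T⁻¹‖ * vecNorm2 (-(Δh + D *ᵥ c)) := by
        rw [hid]; exact vecNorm2_mulVec_le _ _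
    _ ≤ (β / (1 - (m : ℝ) * ηs * β)) * (Real.sqrt m * η + (m : ℝ) * η * vecNorm2 c) := by
        apply mul_le_mul hTinv2 hnum (vecNorm2_nonneg _)
        positivity
    _ = β * (Real.sqrt m + (m : ℝ) * vecNorm2 c) / (1 - (m : ℝ) * ηs * β) * η := by
        field_simp

end
end

section
/- Fix Δ > 0 and ω♯ ∈ ℂ, set z♯ = exp(−i·ω♯·Δ), and let z, ẑ ∈ ℂ be nonzero with |z − z♯| + |ẑ − z| < |z♯|. Then both z/z♯ and ẑ/z♯ avoid the nonpositive real axis, so the prior-selected representatives ω(z) = ω♯ + (i/Δ)·Log(z/z♯) and ω(ẑ) = ω♯ + (i/Δ)·Log(ẑ/z♯) are well defined, and they satisfy |ω(ẑ) − ω(z)| ≤ |ẑ − z| / (Δ·(|z♯| − |z − z♯| − |ẑ − z|)). -/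
open Complex

/-- **Local Lipschitz control of the prior-centered branch in a prior disk.**
For `Δ > 0`, prior `ω♯` with node `z♯ = exp(−iω♯Δ)`, and nonzero `z, zh` with
`|z − z♯| + |zh − z| < |z♯|`, both ratios `z/z♯` and `zh/z♯` avoid the
nonpositive real axis, so the prior-selected representatives
`ω(w) = ω♯ + (i/Δ)·Log(w/z♯)` are well defined, and
`|ω(zh) − ω(z)| ≤ |zh − z| / (Δ(|z♯| − |z − z♯| − |zh − z|))`. -/
theorem prior_branch_lipschitz (Δ : ℝ) (hΔ : 0 < Δ) (ωs zs z zh : ℂ)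
    (hzs : zs = Complex.exp (-Complex.I * ωs * Δ)) (hz : z ≠ 0) (hzh : zh ≠ 0)
    (hdisk : ‖z - zs‖ + ‖zh - z‖ < ‖zs‖) :
    (¬ ∃ r : ℝ, r ≤ 0 ∧ z / zs = (r : ℂ)) ∧
    (¬ ∃ r : ℝ, r ≤ 0 ∧ zh / zs = (r : ℂ)) ∧
    ‖(ωs + Complex.I / (Δ : ℂ) * Complex.log (zh / zs))
        - (ωs + Complex.I / (Δ : ℂ) * Complex.log (z / zs))‖
      ≤ ‖zh - z‖
        / (Δ * (‖zs‖ - ‖z - zs‖ - ‖zh - z‖)) := by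
  have hzs0 : zs ≠ 0 := by rw [hzs]; exact Complex.exp_ne_zero _
  have hzsa : 0 < ‖zs‖ := norm_pos_iff.mpr hzs0
  set a := ‖z - zs‖ with ha
  set b := ‖zh - z‖ with hb
  have ha0 : 0 ≤ a := norm_nonneg _
  have hb0 : 0 ≤ b := norm_nonneg _
  set m := ‖zs‖ - a - b with hm
  have hm0 : 0 < m := by simp only [hm]; linarith
  -- key positivity of real part
  have key : ∀ w : ℂ, ‖w - zs‖ < ‖zs‖ → 0 < (w / zs).re := by
    intro w hw
    have h1 : ‖w / zs - 1‖ < 1 := by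
      have : w / zs - 1 = (w - zs) / zs := by field_simp
      rw [this, norm_div]
      exact (div_lt_one hzsa).2 hw
    have h2 := Complex.abs_re_le_norm (w / zs - 1)
    have h3 : (w / zs - 1).re = (w / zs).re - 1 := by simp
    have h4 : |(w / zs - 1).re| < 1 := lt_of_le_of_lt h2 h1
    have h5 := (abs_lt.1 h4).1
    rw [h3] at h5; linarith
  have hzdisk : ‖z - zs‖ < ‖zs‖ := by linarith
  have hzhdisk : ‖zh - zs‖ < ‖zs‖ := by
    calc ‖zh - zs‖ ≤ ‖zh - z‖ + ‖z - zs‖ := by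
          simpa using norm_sub_le_norm_sub_add_norm_sub zh z zs
      _ < ‖zs‖ := by linarith
  have hrez : 0 < (z / zs).re := key z hzdisk
  have hrezh : 0 < (zh / zs).re := key zh hzhdisk
  refine ⟨?_, ?_, ?_⟩
  · rintro ⟨r, hr, hre⟩
    rw [hre] at hrez
    simp at hrez; linarith
  · rintro ⟨r, hr, hre⟩
    rw [hre] at hrezh
    simp at hrezh; linarith
  -- main estimate
  set S := Metric.closedBall zs (a + b) with hS
  have hzS : z ∈ S := by
    simp only [hS, Metric.mem_closedBall, dist_eq_norm]
    calc ‖z - zs‖ = a := rfl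
      _ ≤ a + b := by linarith
  have hzhS : zh ∈ S := by
    simp only [hS, Metric.mem_closedBall, dist_eq_norm]
    calc ‖zh - zs‖ = ‖zh - zs‖ := rfl
      _ ≤ b + a := by simpa using norm_sub_le_norm_sub_add_norm_sub zh z zs
      _ = a + b := by ring
  have hwprop : ∀ w ∈ S, m ≤ ‖w‖ ∧ ‖w - zs‖ < ‖zs‖ := by
    intro w hw
    simp only [hS, Metric.mem_closedBall, dist_eq_norm] at hw
    have h1 : ‖w - zs‖ ≤ a + b := hw
    constructor
    · have h2 : ‖zs‖ ≤ ‖w - zs‖ + ‖w‖ := by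
        have h3 := norm_sub_le_norm_sub_add_norm_sub zs w 0
        rw [sub_zero, sub_zero] at h3
        rwa [norm_sub_rev zs w] at h3
      simp only [hm]; linarith
    · linarith
  have hderiv : ∀ w ∈ S, HasFDerivWithinAt (fun u => Complex.log (u / zs))
      ((ContinuousLinearMap.smulRight (1 : ℂ →L[ℂ] ℂ) w⁻¹).restrictScalars ℝ) S w := by
    intro w hw
    obtain ⟨hwm, hwd⟩ := hwprop w hw
    have hw0 : w ≠ 0 := by
      intro h; rw [h] at hwm; simp at hwm; linarith
    have hslit : 0 < (w / zs).re ∨ (w / zs).im ≠ 0 := Or.inl (key w hwd)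
    have h1 : HasDerivAt (fun u : ℂ => u / zs) (1 / zs) w := by
      simpa using (hasDerivAt_id w).div_const zs
    have h2 : HasDerivAt Complex.log (w / zs)⁻¹ (w / zs) := Complex.hasDerivAt_log hslit
    have h3 : HasDerivAt (fun u => Complex.log (u / zs)) ((w / zs)⁻¹ * (1 / zs)) w :=
      h2.comp (h := fun u : ℂ => u / zs) w h1
    have h4 : (w / zs)⁻¹ * (1 / zs) = w⁻¹ := by field_simp
    rw [h4] at h3
    exact (h3.hasFDerivAt.restrictScalars ℝ).hasFDerivWithinAt
  have hbound : ∀ w ∈ S,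
      ‖(ContinuousLinearMap.smulRight (1 : ℂ →L[ℂ] ℂ) w⁻¹).restrictScalars ℝ‖ ≤ 1 / m := by
    intro w hw
    obtain ⟨hwm, _⟩ := hwprop w hw
    have hw0 : w ≠ 0 := by
      intro h; rw [h] at hwm; simp at hwm; linarith
    rw [ContinuousLinearMap.norm_restrictScalars, ContinuousLinearMap.norm_smulRight_apply]
    simp only [ContinuousLinearMap.one_def, ContinuousLinearMap.norm_id, one_mul]
    rw [norm_inv, inv_eq_one_div]
    exact one_div_le_one_div_of_le hm0 hwm
  have hlip := (convex_closedBall zs (a + b)).norm_image_sub_le_of_norm_hasFDerivWithin_le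
      hderiv hbound hzS hzhS
  -- hlip : ‖log (zh/zs) - log (z/zs)‖ ≤ (1/m) * ‖zh - z‖
  have heq : (ωs + Complex.I / (Δ : ℂ) * Complex.log (zh / zs))
      - (ωs + Complex.I / (Δ : ℂ) * Complex.log (z / zs))
      = Complex.I / (Δ : ℂ) * (Complex.log (zh / zs) - Complex.log (z / zs)) := by ring
  rw [heq, norm_mul, norm_div, Complex.norm_I, Complex.norm_real, Real.norm_eq_abs, abs_of_pos hΔ]
  have hlog : ‖Complex.log (zh / zs) - Complex.log (z / zs)‖ ≤ (1 / m) * b := hlip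
  rw [div_mul_eq_mul_div, one_mul]
  rw [div_le_div_iff₀ hΔ (by positivity : (0:ℝ) < Δ * m)]
  calc ‖Complex.log (zh / zs) - Complex.log (z / zs)‖ * (Δ * m)
      ≤ (1 / m * b) * (Δ * m) := by
        apply mul_le_mul_of_nonneg_right hlog; positivity
    _ = b * Δ := by field_simp
end

section
/- Fix Δ > 0 and N ∈ ℕ. For n = 0, 1, …, N let ω_n, ω_n^loc, ω̃_n ∈ ℂ and ε_n ≥ 0 satisfy: (a) |ω_n^loc − ω_n| ≤ ε_n for all n; (b) ω̃_n − ω_n^loc ∈ (2π/Δ)·ℤ for all n; and (c) the safe-step inequality |Re(ω_n − ω_{n−1})| + ε_{n−1} + ε_n < π/Δ for n = 1, …, N. Let (ω̂_n) be any sequence with ω̂_0 = ω_0^loc and such that for each n ≥ 1: ω̂_n − ω̃_n ∈ (2π/Δ)·ℤ and −π/Δ ≤ Re(ω̂_n − ω̂_{n−1}) < π/Δ. Then ω̂_n = ω_n^loc for all n = 0, 1, …, N, and in particular |ω̂_n − ω_n| ≤ ε_n for all n. -/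
/-- **Recursive branch-stable continuation without alias slips.**
Along a window scan `n = 0, …, N`, if each locally correct representative
`ω_n^loc` is within `ε_n` of the physical `ω_n`, each raw representative
`ω̃_n` differs from `ω_n^loc` by an alias-lattice element, and the safe-step
inequality `|Re(ω_n − ω_{n−1})| + ε_{n−1} + ε_n < π/Δ` holds, then the
unwrapped sequence `ω̂_n` (initialized at `ω_0^loc`, each term a lattice
translate of `ω̃_n` lying in the strip centered at `ω̂_{n−1}`) coincides with
`ω_n^loc`, and in particular `|ω̂_n − ω_n| ≤ ε_n` for all `n ≤ N`. -/
theorem recursive_branch_continuation (Δ : ℝ) (hΔ : 0 < Δ) (N : ℕ)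
    (ω ωloc ωt ωhat : ℕ → ℂ) (ε : ℕ → ℝ)
    (hε : ∀ n ≤ N, 0 ≤ ε n)
    (ha : ∀ n ≤ N, ‖ωloc n - ω n‖ ≤ ε n)
    (hb : ∀ n ≤ N, ∃ k : ℤ, ωt n - ωloc n = 2 * (Real.pi : ℂ) * (k : ℂ) / (Δ : ℂ))
    (hc : ∀ n, 1 ≤ n → n ≤ N →
      |(ω n - ω (n - 1)).re| + ε (n - 1) + ε n < Real.pi / Δ)
    (h0 : ωhat 0 = ωloc 0)
    (hrec : ∀ n, 1 ≤ n → n ≤ N →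
      (∃ k : ℤ, ωhat n - ωt n = 2 * (Real.pi : ℂ) * (k : ℂ) / (Δ : ℂ)) ∧
      -(Real.pi / Δ) ≤ (ωhat n - ωhat (n - 1)).re ∧
      (ωhat n - ωhat (n - 1)).re < Real.pi / Δ) :
    ∀ n ≤ N, ωhat n = ωloc n ∧ ‖ωhat n - ω n‖ ≤ ε n := by
  have pi_pos := Real.pi_pos
  intro n
  induction n with
  | zero =>
    intro h
    refine ⟨h0, ?_⟩
    rw [h0]; exact ha 0 h
  | succ m ih =>
    intro hmN
    have hm : m ≤ N := Nat.le_of_succ_le hmN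
    obtain ⟨ihhat, -⟩ := ih hm
    obtain ⟨⟨k1, hk1⟩, hlo, hhi⟩ := hrec (m + 1) (Nat.le_add_left 1 m) hmN
    obtain ⟨k2, hk2⟩ := hb (m + 1) hmN
    simp only [Nat.add_sub_cancel] at hlo hhi
    set k : ℤ := k1 + k2 with hkdef
    have key : ωhat (m + 1) - ωloc (m + 1) = ((2 * Real.pi * (k : ℝ) / Δ : ℝ) : ℂ) := by
      simp only [hkdef]
      push_cast
      linear_combination hk1 + hk2
    -- real part decomposition
    have hre : (ωhat (m + 1) - ωhat m).re
        = (ωloc (m + 1) - ωloc m).re + 2 * Real.pi * (k : ℝ) / Δ := by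
      have : ωhat (m + 1) - ωhat m
          = (ωloc (m + 1) - ωloc m) + ((2 * Real.pi * (k : ℝ) / Δ : ℝ) : ℂ) := by
        rw [← key, ihhat]; ring
      rw [this, Complex.add_re, Complex.ofReal_re]
    -- bound on r := (ωloc (m+1) - ωloc m).re
    have h1 : |(ωloc (m + 1) - ω (m + 1)).re| ≤ ε (m + 1) :=
      le_trans (Complex.abs_re_le_norm _) (ha (m + 1) hmN)
    have h2 : |(ωloc m - ω m).re| ≤ ε m :=
      le_trans (Complex.abs_re_le_norm _) (ha m hm)
    have hcm := hc (m + 1) (Nat.le_add_left 1 m) hmN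
    simp only [Nat.add_sub_cancel] at hcm
    have hr : |(ωloc (m + 1) - ωloc m).re| < Real.pi / Δ := by
      have hdecomp : (ωloc (m + 1) - ωloc m).re
          = (ω (m + 1) - ω m).re + (ωloc (m + 1) - ω (m + 1)).re - (ωloc m - ω m).re := by
        simp only [Complex.sub_re]; ring
      rw [hdecomp]
      calc |(ω (m + 1) - ω m).re + (ωloc (m + 1) - ω (m + 1)).re - (ωloc m - ω m).re|
          ≤ |(ω (m + 1) - ω m).re| + |(ωloc (m + 1) - ω (m + 1)).re| + |(ωloc m - ω m).re| := by
            apply (abs_sub _ _).trans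
            gcongr
            exact abs_add_le _ _
        _ ≤ |(ω (m + 1) - ω m).re| + ε m + ε (m + 1) := by
            have := abs_nonneg ((ωloc m - ω m).re)
            linarith
        _ < Real.pi / Δ := hcm
    -- conclude k = 0
    rw [hre] at hlo hhi
    rw [abs_lt] at hr
    have hdpos : (0:ℝ) < Real.pi / Δ := by positivity
    have e1 : 2 * Real.pi * (k : ℝ) / Δ = (k : ℝ) * (2 * (Real.pi / Δ)) := by ring
    rw [e1] at hhi hlo
    have hlt : (k : ℝ) < 1 := by
      have h : (k : ℝ) * (2 * (Real.pi / Δ)) < 1 * (2 * (Real.pi / Δ)) := by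
        rw [one_mul]; linarith [hr.1, hhi]
      exact lt_of_mul_lt_mul_right h (by positivity)
    have hgt : (-1 : ℝ) < (k : ℝ) := by
      have h : (-1 : ℝ) * (2 * (Real.pi / Δ)) < (k : ℝ) * (2 * (Real.pi / Δ)) := by
        have e2 : (-1 : ℝ) * (2 * (Real.pi / Δ)) = -(2 * (Real.pi / Δ)) := by ring
        rw [e2]; linarith [hr.2, hlo]
      exact lt_of_mul_lt_mul_right h (by positivity)
    have hk0 : k = 0 := by
      have h1 : k < 1 := by exact_mod_cast hlt
      have h2 : (-1 : ℤ) < k := by exact_mod_cast hgt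
      omega
    have heq : ωhat (m + 1) = ωloc (m + 1) := by
      have hz : ωhat (m + 1) - ωloc (m + 1) = 0 := by rw [key, hk0]; norm_num
      exact sub_eq_zero.mp hz
    exact ⟨heq, by rw [heq]; exact ha (m + 1) hmN⟩
end

section
/- Let z₁, z₂ ∈ ℂ with z₁ ≠ z₂ and a₁, a₂ ∈ ℂ with a₁·a₂ ≠ 0; set δ = |z₁ − z₂|, a_min = min{|a₁|, |a₂|}, R = max{|z₁|, |z₂|}, and define y_q = a₁z₁^q + a₂z₂^q for q = 0, 1, 2, let Y₀ = [[y₀, y₁], [y₁, y₂]], V = [[1, 1], [z₁, z₂]], and A = diag(a₁, a₂). Then: (i) Y₀ = V·A·Vᵀ and det Y₀ = a₁a₂(z₁ − z₂)²; (ii) ‖V‖₂ ≤ √(2(1 + R²)); (iii) V⁻¹ = (1/(z₂ − z₁))·[[z₂, −1], [−z₁, 1]] and ‖V⁻¹‖₂ ≤ √(2(1 + R²))/δ; and (iv) Y₀ is invertible with ‖Y₀⁻¹‖₂ ≤ 2(1 + R²)/(a_min·δ²). -/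
open Matrix

noncomputable section

lemma euclid_norm_apply (M : Matrix (Fin 2) (Fin 2) ℂ) (x : EuclideanSpace ℂ (Fin 2)) :
    ‖Matrix.toEuclideanCLM (𝕜 := ℂ) M x‖ =
      Real.sqrt (‖M.mulVec x 0‖ ^ 2 + ‖M.mulVec x 1‖ ^ 2) := by
  rw [EuclideanSpace.norm_eq]
  simp [Fin.sum_univ_two]

lemma euclid_norm_x (x : EuclideanSpace ℂ (Fin 2)) :
    ‖x‖ = Real.sqrt (‖x 0‖ ^ 2 + ‖x 1‖ ^ 2) := by
  rw [EuclideanSpace.norm_eq]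
  simp [Fin.sum_univ_two]

lemma cs2 (a b u v : ℂ) : ‖a * u + b * v‖ ^ 2 ≤
    (‖a‖ ^ 2 + ‖b‖ ^ 2) * (‖u‖ ^ 2 + ‖v‖ ^ 2) := by
  have h : ‖a * u + b * v‖ ≤
      ‖a‖ * ‖u‖ + ‖b‖ * ‖v‖ := by
    refine (norm_add_le _ _).trans ?_
    simp [norm_mul]
  have h0 := norm_nonneg (a * u + b * v)
  have h1 := norm_nonneg a
  have h2 := norm_nonneg b
  have h3 := norm_nonneg u
  have h4 := norm_nonneg v
  nlinarith [sq_nonneg (‖a‖ * ‖v‖ - ‖b‖ * ‖u‖)]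

lemma opNorm2_le_frob (M : Matrix (Fin 2) (Fin 2) ℂ) :
    opNorm2 M ≤ Real.sqrt (‖M 0 0‖ ^ 2 + ‖M 0 1‖ ^ 2 +
      ‖M 1 0‖ ^ 2 + ‖M 1 1‖ ^ 2) := by
  refine ContinuousLinearMap.opNorm_le_bound _ (Real.sqrt_nonneg _) fun x => ?_
  rw [euclid_norm_apply, euclid_norm_x, ← Real.sqrt_mul (by positivity)]
  apply Real.sqrt_le_sqrt
  have hm0 : M.mulVec x 0 = M 0 0 * x 0 + M 0 1 * x 1 := by
    simp [Matrix.mulVec, dotProduct, Fin.sum_univ_two]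
  have hm1 : M.mulVec x 1 = M 1 0 * x 0 + M 1 1 * x 1 := by
    simp [Matrix.mulVec, dotProduct, Fin.sum_univ_two]
  rw [hm0, hm1]
  have h0 := cs2 (M 0 0) (M 0 1) (x 0) (x 1)
  have h1 := cs2 (M 1 0) (M 1 1) (x 0) (x 1)
  nlinarith [sq_nonneg (‖x 0‖), sq_nonneg (‖x 1‖)]

lemma opNorm2_diag_le (d0 d1 : ℂ) (c : ℝ) (h0 : ‖d0‖ ≤ c)
    (h1 : ‖d1‖ ≤ c) : opNorm2 !![d0, 0; 0, d1] ≤ c := by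
  have hc : 0 ≤ c := (norm_nonneg _).trans h0
  refine ContinuousLinearMap.opNorm_le_bound _ hc fun x => ?_
  rw [euclid_norm_apply, euclid_norm_x]
  have hm0 : (!![d0, 0; 0, d1]).mulVec x 0 = d0 * x 0 := by
    simp [Matrix.mulVec, dotProduct, Fin.sum_univ_two]
  have hm1 : (!![d0, 0; 0, d1]).mulVec x 1 = d1 * x 1 := by
    simp [Matrix.mulVec, dotProduct, Fin.sum_univ_two]
  rw [hm0, hm1, ← Real.sqrt_sq hc, ← Real.sqrt_mul (by positivity)]
  apply Real.sqrt_le_sqrt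
  have e0 := norm_nonneg (x 0)
  have e1 := norm_nonneg (x 1)
  have f0 := norm_nonneg d0
  have f1 := norm_nonneg d1
  simp only [norm_mul, mul_pow]
  nlinarith [sq_nonneg (‖x 0‖), sq_nonneg (‖x 1‖),
    mul_le_mul h0 h0 f0 hc, mul_le_mul h1 h1 f1 hc]

lemma opNorm2_mul_le (M N : Matrix (Fin 2) (Fin 2) ℂ) :
    opNorm2 (M * N) ≤ opNorm2 M * opNorm2 N := by
  unfold opNorm2
  rw [_root_.map_mul]
  exact norm_mul_le _ _

lemma opNorm2_nonneg (M : Matrix (Fin 2) (Fin 2) ℂ) : 0 ≤ opNorm2 M := norm_nonneg _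

/-- **Exact factorizations and separation bounds for the two-node model.**
With distinct nodes `z₁ ≠ z₂`, nonzero amplitudes, `δ = |z₁ − z₂|`,
`a_min = min(|a₁|, |a₂|)`, `R = max(|z₁|, |z₂|)`, samples
`y_q = a₁z₁^q + a₂z₂^q`, Hankel block `Y₀`, Vandermonde `V`, `A = diag(a₁,a₂)`:
(i) `Y₀ = V A Vᵀ` and `det Y₀ = a₁a₂(z₁ − z₂)²`; (ii) `‖V‖₂ ≤ √(2(1+R²))`;
(iii) `V⁻¹ = (z₂−z₁)⁻¹ [[z₂, −1], [−z₁, 1]]` with `‖V⁻¹‖₂ ≤ √(2(1+R²))/δ`;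
(iv) `Y₀` is invertible with `‖Y₀⁻¹‖₂ ≤ 2(1+R²)/(a_min δ²)`. -/
theorem two_node_hankel_bounds (z1 z2 a1 a2 : ℂ)
    (hz : z1 ≠ z2) (ha1 : a1 ≠ 0) (ha2 : a2 ≠ 0)
    (δ amin R : ℝ)
    (hδ : δ = ‖z1 - z2‖)
    (hamin : amin = min ‖a1‖ ‖a2‖)
    (hR : R = max ‖z1‖ ‖z2‖)
    (y : ℕ → ℂ) (hy : ∀ q, y q = a1 * z1 ^ q + a2 * z2 ^ q)
    (Y0 V A : Matrix (Fin 2) (Fin 2) ℂ)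
    (hY0 : Y0 = !![y 0, y 1; y 1, y 2])
    (hV : V = !![1, 1; z1, z2])
    (hA : A = !![a1, 0; 0, a2]) :
    (Y0 = V * A * Vᵀ ∧ Y0.det = a1 * a2 * (z1 - z2) ^ 2) ∧
    opNorm2 V ≤ Real.sqrt (2 * (1 + R ^ 2)) ∧
    (V⁻¹ = (z2 - z1)⁻¹ • !![z2, -1; -z1, 1] ∧
      opNorm2 (V⁻¹) ≤ Real.sqrt (2 * (1 + R ^ 2)) / δ) ∧
    (IsUnit Y0 ∧ opNorm2 (Y0⁻¹) ≤ 2 * (1 + R ^ 2) / (amin * δ ^ 2)) := by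
  have hzz : z2 - z1 ≠ 0 := sub_ne_zero_of_ne hz.symm
  have hδpos : 0 < δ := by
    rw [hδ]
    exact norm_pos_iff.mpr (sub_ne_zero_of_ne hz)
  have haminpos : 0 < amin := by
    rw [hamin]
    exact lt_min (norm_pos_iff.mpr ha1) (norm_pos_iff.mpr ha2)
  have hR1 : ‖z1‖ ≤ R := hR ▸ le_max_left _ _
  have hR2 : ‖z2‖ ≤ R := hR ▸ le_max_right _ _
  have hRnn : 0 ≤ R := (norm_nonneg _).trans hR1
  have hz1nn := norm_nonneg z1
  have hz2nn := norm_nonneg z2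
  -- (i) factorization
  have hfact : Y0 = V * A * Vᵀ := by
    subst hY0 hV hA
    ext i j
    fin_cases i <;> fin_cases j <;>
      simp [Matrix.mul_apply, Matrix.transpose_apply, Fin.sum_univ_two, hy,
        Matrix.vecHead, Matrix.vecTail] <;> ring
  have hdet : Y0.det = a1 * a2 * (z1 - z2) ^ 2 := by
    rw [hY0, Matrix.det_fin_two_of]
    simp [hy]
    ring
  -- (ii) norm of V
  have hnormV : opNorm2 V ≤ Real.sqrt (2 * (1 + R ^ 2)) := by
    refine le_trans (by simpa [hV] using opNorm2_le_frob V) ?_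
    apply Real.sqrt_le_sqrt
    nlinarith [mul_le_mul hR1 hR1 hz1nn hRnn, mul_le_mul hR2 hR2 hz2nn hRnn]
  -- (iii) inverse of V
  have hVinv : V⁻¹ = (z2 - z1)⁻¹ • !![z2, -1; -z1, 1] := by
    apply Matrix.inv_eq_right_inv
    subst hV
    ext i j
    fin_cases i <;> fin_cases j <;>
      simp [Matrix.mul_apply, Fin.sum_univ_two, Matrix.one_apply] <;> field_simp <;> ring
  have habs : ‖z2 - z1‖ = δ := by
    rw [hδ, norm_sub_rev]
  have hentry : ∀ w : ℂ, ‖(z2 - z1)⁻¹ * w‖ ^ 2 = ‖w‖ ^ 2 / δ ^ 2 := by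
    intro w
    rw [norm_mul, norm_inv, habs]
    field_simp
  -- generic bound for scaled 2×2 matrices
  have hbound : ∀ w00 w01 w10 w11 : ℂ,
      ‖w00‖ ^ 2 + ‖w01‖ ^ 2 + ‖w10‖ ^ 2 + ‖w11‖ ^ 2
        ≤ 2 * (1 + R ^ 2) →
      opNorm2 ((z2 - z1)⁻¹ • !![w00, w01; w10, w11]) ≤ Real.sqrt (2 * (1 + R ^ 2)) / δ := by
    intro w00 w01 w10 w11 h
    have hfr := opNorm2_le_frob ((z2 - z1)⁻¹ • !![w00, w01; w10, w11])
    simp only [Matrix.smul_apply, smul_eq_mul, Matrix.cons_val_zero, Matrix.cons_val_one,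
      Matrix.head_cons, Matrix.cons_val', Matrix.empty_val', Matrix.cons_val_fin_one,
      Matrix.head_fin_const] at hfr
    refine hfr.trans ?_
    have hsum : ‖(z2 - z1)⁻¹ * w00‖ ^ 2 + ‖(z2 - z1)⁻¹ * w01‖ ^ 2 +
        ‖(z2 - z1)⁻¹ * w10‖ ^ 2 + ‖(z2 - z1)⁻¹ * w11‖ ^ 2
        ≤ 2 * (1 + R ^ 2) / δ ^ 2 := by
      rw [hentry, hentry, hentry, hentry, ← add_div, ← add_div, ← add_div]
      exact div_le_div_of_nonneg_right h (by positivity) |>.trans_eq rfl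
    refine le_trans (Real.sqrt_le_sqrt hsum) ?_
    rw [Real.sqrt_div (by positivity), Real.sqrt_sq hδpos.le]
  have hnormVinv : opNorm2 (V⁻¹) ≤ Real.sqrt (2 * (1 + R ^ 2)) / δ := by
    rw [hVinv]
    refine hbound z2 (-1) (-z1) 1 ?_
    simp only [norm_neg, norm_one]
    nlinarith [mul_le_mul hR1 hR1 hz1nn hRnn, mul_le_mul hR2 hR2 hz2nn hRnn]
  -- (iv)
  have hdetne : Y0.det ≠ 0 := by
    rw [hdet]
    exact mul_ne_zero (mul_ne_zero ha1 ha2) (pow_ne_zero _ (sub_ne_zero_of_ne hz))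
  have hunit : IsUnit Y0 := by
    rw [Matrix.isUnit_iff_isUnit_det]
    exact isUnit_iff_ne_zero.mpr hdetne
  have hAinv : A⁻¹ = !![a1⁻¹, 0; 0, a2⁻¹] := by
    apply Matrix.inv_eq_right_inv
    subst hA
    ext i j
    fin_cases i <;> fin_cases j <;>
      simp [Matrix.mul_apply, Fin.sum_univ_two, Matrix.one_apply, ha1, ha2]
  have hY0inv : Y0⁻¹ = (V⁻¹)ᵀ * (A⁻¹ * V⁻¹) := by
    rw [hfact, Matrix.mul_inv_rev, Matrix.mul_inv_rev, Matrix.transpose_nonsing_inv]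
  have hnormVT : opNorm2 ((V⁻¹)ᵀ) ≤ Real.sqrt (2 * (1 + R ^ 2)) / δ := by
    rw [hVinv]
    have htr : (((z2 - z1)⁻¹ • !![z2, -1; -z1, 1] : Matrix (Fin 2) (Fin 2) ℂ))ᵀ =
        (z2 - z1)⁻¹ • !![z2, -z1; -1, 1] := by
      ext i j
      fin_cases i <;> fin_cases j <;> simp
    rw [htr]
    refine hbound z2 (-z1) (-1) 1 ?_
    simp only [norm_neg, norm_one]
    nlinarith [mul_le_mul hR1 hR1 hz1nn hRnn, mul_le_mul hR2 hR2 hz2nn hRnn]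
  have hnormAinv : opNorm2 (A⁻¹) ≤ amin⁻¹ := by
    rw [hAinv]
    apply opNorm2_diag_le
    · rw [norm_inv]
      exact inv_anti₀ haminpos (hamin ▸ min_le_left _ _)
    · rw [norm_inv]
      exact inv_anti₀ haminpos (hamin ▸ min_le_right _ _)
  have hnormY0inv : opNorm2 (Y0⁻¹) ≤ 2 * (1 + R ^ 2) / (amin * δ ^ 2) := by
    rw [hY0inv]
    set s := Real.sqrt (2 * (1 + R ^ 2)) with hsdef
    have hss : s * s = 2 * (1 + R ^ 2) := Real.mul_self_sqrt (by positivity)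
    have hsnn : 0 ≤ s := Real.sqrt_nonneg _
    have step1 : opNorm2 ((V⁻¹)ᵀ * (A⁻¹ * V⁻¹)) ≤ (s / δ) * (amin⁻¹ * (s / δ)) := by
      refine le_trans (opNorm2_mul_le _ _) ?_
      have h2 : opNorm2 (A⁻¹ * V⁻¹) ≤ amin⁻¹ * (s / δ) := by
        refine le_trans (opNorm2_mul_le _ _) ?_
        exact mul_le_mul hnormAinv hnormVinv (opNorm2_nonneg _) (by positivity)
      exact mul_le_mul hnormVT h2 (opNorm2_nonneg _) (by positivity)
    refine step1.trans (le_of_eq ?_)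
    rw [← hss]
    field_simp
  exact ⟨⟨hfact, hdet⟩, hnormV, ⟨hVinv, hnormVinv⟩, hunit, hnormY0inv⟩

end
end
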